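/- Let W : ℕ → A be an infinite word over a finite alphabet A. Then there exists a uniformly recurrent infinite word Ŵ : ℕ → A all of whose factors are factors of W, i.e. F(Ŵ) ⊆ F(W). -/

import Mathlib

/-- The finite word `u` occurs in the infinite word `W` at position `i`. -/
def occursAt {A : Type*} (W : ℕ → A) (u : List A) (i : ℕ) : Prop :=
  u = (List.range u.length).map (fun j => W (i + j))

def IsFactor {A : Type*} (W : ℕ → A) (u : List A) : Prop :=
  ∃ i, occursAt W u i

def UniformlyRecurrent {A : Type*} (W : ℕ → A) : Prop :=
  ∀ v, IsFactor W v → ∃ N : ℕ, ∀ u, IsFactor W u → u.length = N → v <:+: u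

/-!
The closure of the shift orbit of `W` is a nonempty closed shift-invariant subset of the compact
space `ℕ → A`, and since an occurrence of a word at a given position is a clopen condition, every
factor of a point of this orbit closure is a factor of `W`. By Zorn's lemma and Cantor's
intersection theorem it contains a minimal nonempty closed invariant set `M`. Every point `x` of
`M` is uniformly recurrent: the points of `M` avoiding a factor `v` of `x` form a smaller closed
invariant set, so there are none, and by compactness of `M` the first occurrence of `v` in a point
of `M` lies below a uniform bound `N`. Applied to the shifts of `x`, which stay in `M`, this puts
an occurrence of `v` in every factor of `x` of length `N + |v|`.
-/

open Set SymbolicDynamics.FullShift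

theorem IsClosed.exists_minimal_nonempty_closed_invariant_subset {X ι : Type*}
    [TopologicalSpace X] [CompactSpace X] {S : Set X} (hS : IsClosed S) (f : ι → X → X)
    (hne : S.Nonempty) (hf : ∀ i, MapsTo (f i) S S) :
    ∃ M ⊆ S, Minimal (fun M => M.Nonempty ∧ IsClosed M ∧ ∀ i, MapsTo (f i) M M) M := by
  refine zorn_superset_nonempty {M | M.Nonempty ∧ IsClosed M ∧ ∀ i, MapsTo (f i) M M}
    (fun c hc hchain hcne => ⟨⋂₀ c, ⟨?_, ?_, ?_⟩, fun _ => sInter_subset_of_mem⟩) S ⟨hne, hS, hf⟩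
  · have : Nonempty c := hcne.to_subtype
    have hdir : DirectedOn (· ⊇ ·) c := fun a ha b hb =>
      (hchain.total ha hb).elim (fun h => ⟨a, ha, subset_rfl, h⟩) (fun h => ⟨b, hb, h, subset_rfl⟩)
    exact IsCompact.nonempty_sInter_of_directed_nonempty_isCompact_isClosed hdir
      (fun M hM => (hc hM).1) (fun M hM => (hc hM).2.1.isCompact) (fun M hM => (hc hM).2.1)
  · exact isClosed_sInter fun M hM => (hc hM).2.1
  · exact fun i x hx M hM => (hc hM).2.2 i (hx M hM)

lemma mapsTo_shift_closure_range_shift {A G : Type*} [TopologicalSpace A] [AddMonoid G]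
    (x : G → A) (g : G) :
    MapsTo (shift g) (closure (range fun h => shift h x)) (closure (range fun h => shift h x)) :=
  MapsTo.closure (by rintro _ ⟨h, rfl⟩; exact ⟨h + g, shift_add h g x⟩) (continuous_shift g)

section Occurrences

variable {A : Type*}

lemma occursAt_iff {W : ℕ → A} {u : List A} {i : ℕ} :
    occursAt W u i ↔ ∀ j (hj : j < u.length), W (i + j) = u[j] := by
  simp [occursAt, List.ext_getElem_iff, eq_comm]

lemma occursAt_shift {W : ℕ → A} {u : List A} {k i : ℕ} :
    occursAt (shift k W) u i ↔ occursAt W u (k + i) := by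
  simp [occursAt, add_assoc]

lemma infix_of_occursAt {W : ℕ → A} {u v : List A} {i j : ℕ} (hu : occursAt W u i)
    (hv : occursAt W v (i + j)) (hj : j + v.length ≤ u.length) : v <:+: u := by
  have hv_eq : v = (u.drop j).take v.length := by
    refine List.ext_getElem (by simp only [List.length_take, List.length_drop]; omega)
      fun n hn _ => ?_
    simp only [List.getElem_take, List.getElem_drop]
    rw [← occursAt_iff.1 hu (j + n) (by omega), ← occursAt_iff.1 hv n hn, add_assoc]
  rw [hv_eq]
  exact (List.take_prefix _ _).isInfix.trans (List.drop_suffix _ _).isInfix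

lemma setOf_occursAt_eq_iInter (u : List A) (i : ℕ) :
    {x : ℕ → A | occursAt x u i} = ⋂ j : Fin u.length, (fun x => x (i + j)) ⁻¹' {u[(j : ℕ)]} := by
  ext x
  simp [occursAt_iff, Fin.forall_iff]

variable [TopologicalSpace A] [DiscreteTopology A]

lemma isClopen_setOf_occursAt (u : List A) (i : ℕ) : IsClopen {x : ℕ → A | occursAt x u i} := by
  rw [setOf_occursAt_eq_iInter]
  exact ⟨isClosed_iInter fun j => (isClosed_discrete _).preimage (continuous_apply _),
    isOpen_iInter_of_finite fun j => (isOpen_discrete _).preimage (continuous_apply _)⟩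

lemma IsFactor.of_mem_closure_range_shift {W x : ℕ → A}
    (hx : x ∈ closure (range fun k => shift k W)) {u : List A} (hu : IsFactor x u) :
    IsFactor W u := by
  obtain ⟨i, hi⟩ := hu
  obtain ⟨_, hk, k, rfl⟩ := mem_closure_iff.1 hx _ (isClopen_setOf_occursAt u i).isOpen hi
  exact ⟨k + i, occursAt_shift.1 hk⟩

section Minimal

variable {M : Set (ℕ → A)}
  (hM : Minimal (fun M => M.Nonempty ∧ IsClosed M ∧ ∀ k, MapsTo (shift k) M M) M)
include hM

lemma IsFactor.of_mem_minimal {x y : ℕ → A} (hx : x ∈ M) (hy : y ∈ M) {v : List A}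
    (hv : IsFactor x v) : IsFactor y v := by
  by_contra hy_avoid
  set C := M ∩ ⋂ j, {z | occursAt z v j}ᶜ
  have hC : C.Nonempty ∧ IsClosed C ∧ ∀ k, MapsTo (shift k) C C := by
    refine ⟨⟨y, hy, mem_iInter.2 fun j hj => hy_avoid ⟨j, hj⟩⟩, ?_, ?_⟩
    · exact hM.prop.2.1.inter
        (isClosed_iInter fun j => (isClopen_setOf_occursAt v j).compl.isClosed)
    · exact fun k z hz => ⟨hM.prop.2.2 k hz.1,
        mem_iInter.2 fun j hj => mem_iInter.1 hz.2 (k + j) (occursAt_shift.1 hj)⟩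
  obtain ⟨i, hi⟩ := hv
  exact mem_iInter.1 ((hM.eq_of_subset hC inter_subset_left).symm ▸ hx : x ∈ C).2 i hi

theorem uniformlyRecurrent_of_mem_minimal [Finite A] {x : ℕ → A} (hx : x ∈ M) :
    UniformlyRecurrent x := by
  intro v hv
  have hcover : M ⊆ ⋃ n, ⋃ j ∈ Iio n, {y | occursAt y v j} := fun y hy => by
    obtain ⟨j, hj⟩ := hv.of_mem_minimal hM hx hy
    exact mem_iUnion.2 ⟨j + 1, mem_iUnion₂.2 ⟨j, by simp, hj⟩⟩
  obtain ⟨N, hN⟩ := hM.prop.2.1.isCompact.elim_directed_cover _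
    (fun n => isOpen_biUnion fun j _ => (isClopen_setOf_occursAt v j).isOpen) hcover
    (Monotone.directed_le fun m n hmn => biUnion_subset_biUnion_left (Iio_subset_Iio hmn))
  refine ⟨N + v.length, fun u ⟨k, hk⟩ hlen => ?_⟩
  obtain ⟨j, hjN, hj⟩ := mem_iUnion₂.1 (hN (hM.prop.2.2 k hx))
  exact infix_of_occursAt hk (occursAt_shift.1 hj) (by have := mem_Iio.1 hjN; omega)

end Minimal

end Occurrences

/-- Every infinite word over a finite alphabet contains (in the sense of factor
inclusion) a uniformly recurrent infinite word. -/
theorem exists_uniformlyRecurrent_subword {A : Type*} [Fintype A] (W : ℕ → A) :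
    ∃ What : ℕ → A, UniformlyRecurrent What ∧
      ∀ u, IsFactor What u → IsFactor W u := by
  let _ : TopologicalSpace A := ⊥
  have : DiscreteTopology A := ⟨rfl⟩
  have hX : IsClosed (closure (range fun k => shift k W)) := isClosed_closure
  obtain ⟨M, hM_sub, hM⟩ := hX.exists_minimal_nonempty_closed_invariant_subset shift
    ⟨W, subset_closure ⟨0, shift_zero W⟩⟩ (mapsTo_shift_closure_range_shift W)
  obtain ⟨x, hx⟩ := hM.prop.1
  exact ⟨x, uniformlyRecurrent_of_mem_minimal hM hx,
    fun u => IsFactor.of_mem_closure_range_shift (hM_sub hx)⟩
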